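/- arXiv:2405.16035 — 3 statements merged into one kernel-verified Lean document; each statement's English description precedes it below -/
import Mathlib

section
/- Let N be a network and uv an edge in some root component of N. Then the semidirected graph N' obtained from N by directing uv as (u, v) is a network, and N' is phylogenetically compatible with N. -/
open Relation

/-- A semidirected graph: a set of undirected edges and a set of directed edges. -/
structure SDG (V : Type) where
  undir : Finset (Sym2 V)
  dir : Finset (V × V)

namespace SDG

variable {V : Type} [DecidableEq V]

/-- one step along a directed edge -/
def dstep (N : SDG V) (u v : V) : Prop := (u, v) ∈ N.dir

/-- one step along an undirected edge -/
def ustep (N : SDG V) (u v : V) : Prop := s(u, v) ∈ N.undir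

/-- one step of a semidirected path -/
def sstep (N : SDG V) (u v : V) : Prop := N.dstep u v ∨ N.ustep u v

/-- directed reachability (existence of a directed path) -/
def dreach (N : SDG V) : V → V → Prop := ReflTransGen N.dstep

/-- reachability using undirected edges only -/
def ureach (N : SDG V) : V → V → Prop := ReflTransGen N.ustep

/-- semidirected reachability (existence of a semidirected path) -/
def sreach (N : SDG V) : V → V → Prop := ReflTransGen N.sstep

/-- `M` is obtained from `N` by directing some of the undirected edges of `N`
(each such edge receiving exactly one direction). -/
def Directs (N M : SDG V) : Prop :=
  M.undir ⊆ N.undir ∧ N.dir ⊆ M.dir ∧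
    (∀ e ∈ M.dir, e ∉ N.dir → s(e.1, e.2) ∈ N.undir ∧ s(e.1, e.2) ∉ M.undir) ∧
    (∀ p ∈ N.undir, p ∉ M.undir →
      ∃! e : V × V, e ∈ M.dir ∧ e ∉ N.dir ∧ s(e.1, e.2) = p)

/-- a semidirected graph is directed when it has no undirected edges -/
def IsDirected (N : SDG V) : Prop := N.undir = ∅

/-- existence of a directed cycle -/
def HasDirCycle (N : SDG V) : Prop := ∃ e ∈ N.dir, N.dreach e.2 e.1

/-- `N` is acyclic if no compatible directed graph (obtained by directing all
undirected edges) has a directed cycle. -/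
def Acyclic (N : SDG V) : Prop :=
  ∀ G : SDG V, Directs N G → G.IsDirected → ¬ G.HasDirCycle

/-- in-degree: number of incoming directed edges -/
def ideg (N : SDG V) (v : V) : ℕ := (N.dir.filter fun e => e.2 = v).card

/-- out-degree: number of outgoing directed edges -/
def odeg (N : SDG V) (v : V) : ℕ := (N.dir.filter fun e => e.1 = v).card

/-- number of incident undirected edges -/
def udeg (N : SDG V) (v : V) : ℕ := (N.undir.filter fun p => v ∈ p).card

/-- total degree -/
def deg (N : SDG V) (v : V) : ℕ := N.ideg v + N.odeg v + N.udeg v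

/-- hybrid edges: directed edges whose child is a hybrid node (in-degree ≥ 2) -/
def hybridEdges (N : SDG V) : Finset (V × V) := N.dir.filter fun e => 2 ≤ N.ideg e.2

/-- no self-loops, and no undirected edge parallel to a directed edge -/
def Proper (N : SDG V) : Prop :=
  (∀ p ∈ N.undir, ¬ p.IsDiag) ∧ (∀ e ∈ N.dir, e.1 ≠ e.2) ∧
    ∀ e ∈ N.dir, s(e.1, e.2) ∉ N.undir

/-- `M` is phylogenetically compatible with `N`: `M` is an SDAG obtained from
`N` by directing some undirected edges, keeping the same hybrid edges. -/
def PhyloCompat (M N : SDG V) : Prop :=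
  Directs N M ∧ M.Acyclic ∧ M.hybridEdges = N.hybridEdges

/-- a rooted partner of `N`: a DAG phylogenetically compatible with `N` -/
def RootedPartner (G N : SDG V) : Prop := PhyloCompat G N ∧ G.IsDirected

/-- a network: an SDAG admitting a rooted partner -/
def IsNetwork (N : SDG V) : Prop := N.Acyclic ∧ ∃ G : SDG V, RootedPartner G N

/-- mutual semidirected reachability (same undirected component) -/
def sim (N : SDG V) (u v : V) : Prop := N.sreach u v ∧ N.sreach v u

/-- `v` lies in a root component: its undirected component is maximal for the
semidirected-path preorder -/
def InRootComp (N : SDG V) (v : V) : Prop := ∀ u, N.sreach u v → N.sreach v u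

/-- the undirected simple graph induced by the undirected edges -/
def undirGraph (N : SDG V) : SimpleGraph V :=
  SimpleGraph.fromEdgeSet (N.undir : Set (Sym2 V))

/-- leaf in some rooted partner -/
def IsUnrootedLeaf (N : SDG V) (v : V) : Prop :=
  ∃ G : SDG V, RootedPartner G N ∧ G.odeg v = 0

/-- leaf in every rooted partner -/
def IsRootedLeaf (N : SDG V) (v : V) : Prop :=
  ∀ G : SDG V, RootedPartner G N → G.odeg v = 0

/-- a leaf-labeled network: a network whose unrooted leaves are all rooted leaves
(so that its leaf set is stable across rooted partners and can be labeled) -/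
def LNetwork (N : SDG V) : Prop :=
  IsNetwork N ∧ ∀ v, IsUnrootedLeaf N v → IsRootedLeaf N v

/-- `l` is (the list of nodes of) a directed path from `u` to `v` in `G` -/
def IsDPathList (G : SDG V) (u v : V) (l : List V) : Prop :=
  l.head? = some u ∧ l.getLast? = some v ∧ l.Chain' G.dstep

/-- the number of directed paths from `u` to `v` -/
noncomputable def pathCount (G : SDG V) (u v : V) : ℕ :=
  Set.ncard {l : List V | IsDPathList G u v l}

/-- the set of directed paths starting at `v` -/
def startPaths (G : SDG V) (v : V) : Set (List V) :=
  {l : List V | l.head? = some v ∧ l.Chain' G.dstep}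

/-- a root choice function: picks one node in each root component, constant on
root components, and the identity outside of root components -/
def RootChoice (N : SDG V) (ρ : V → V) : Prop :=
  (∀ v, InRootComp N v → sim N v (ρ v) ∧ ∀ u, InRootComp N u → sim N u v → ρ u = ρ v) ∧
    ∀ v, ¬ InRootComp N v → ρ v = v

/-- `G` is the rooted partner of `N` whose set of roots (in-degree 0 nodes) is the
image of the root choice function `ρ` -/
def PartnerFor (N : SDG V) (ρ : V → V) (G : SDG V) : Prop :=
  RootedPartner G N ∧ {v | G.ideg v = 0} = ρ '' {v | InRootComp N v}

-- the directional μ-vector of `(u, v)`: path counts from `v` to each node in any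
-- rooted partner directing the edge `uv` as `(u, v)`
open Classical in
noncomputable def muD (N : SDG V) (u v : V) : V → ℕ :=
  if h : ∃ G : SDG V, RootedPartner G N ∧ (u, v) ∈ G.dir then
    fun x => pathCount h.choose v x
  else fun _ => 0

-- the root μ-vector of the root component of `t`
open Classical in
noncomputable def muR (N : SDG V) (t : V) : V → ℕ :=
  if h : ∃ p : (V → V) × SDG V, RootChoice N p.1 ∧ PartnerFor N p.1 p.2 then
    fun x => pathCount h.choose.2 (h.choose.1 t) x
  else fun _ => 0

/-- a DAG is tree-child if every non-leaf node has a tree-node child -/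
def TreeChildDAG (G : SDG V) : Prop :=
  ∀ v, 0 < G.odeg v → ∃ w, (v, w) ∈ G.dir ∧ G.ideg w ≤ 1

/-- all rooted partners are tree-child -/
def StronglyTreeChild (N : SDG V) : Prop :=
  ∀ G : SDG V, RootedPartner G N → TreeChildDAG G

/-- some rooted partner is tree-child -/
def WeaklyTreeChild (N : SDG V) : Prop :=
  ∃ G : SDG V, RootedPartner G N ∧ TreeChildDAG G

/-- coordinatewise comparison of μ-vectors over the leaves of `N` -/
def muLE (N : SDG V) (m m' : V → ℕ) : Prop :=
  ∀ x, IsUnrootedLeaf N x → m x ≤ m' x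

/-- incomparability of μ-vectors (over the leaves of `N`) -/
def muIncomp (N : SDG V) (m m' : V → ℕ) : Prop :=
  ¬ muLE N m m' ∧ ¬ muLE N m' m

/-- a network is complete when every undirected edge lies in a root component
(equivalently, it equals its completion) -/
def Complete (N : SDG V) : Prop := ∀ p ∈ N.undir, ∀ v ∈ p, InRootComp N v

/-- reachability by a tree path (directed path whose edges are all tree edges) -/
def treeReach (G : SDG V) : V → V → Prop :=
  ReflTransGen fun a b => (a, b) ∈ G.dir ∧ G.ideg b ≤ 1

/-- `v` has a tree descendant leaf -/
def HasTreeDescLeaf (G : SDG V) (v : V) : Prop := ∃ x, G.odeg x = 0 ∧ treeReach G v x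

/-- `l` is an elementary path from `u` to `v`: a directed path whose first node
has out-degree 1 and whose intermediate nodes have in- and out-degree 1 -/
def IsElemPathList (G : SDG V) (u v : V) (l : List V) : Prop :=
  l.head? = some u ∧ l.getLast? = some v ∧ l.Chain' G.dstep ∧ 2 ≤ l.length ∧
    G.odeg u = 1 ∧ ∀ w ∈ (l.drop 1).dropLast, G.ideg w = 1 ∧ G.odeg w = 1

/-- an elementary node: a tree node with out-degree = total degree = 1, or
out-degree < total degree = 2 -/
def IsElemNode (G : SDG V) (v : V) : Prop :=
  G.ideg v ≤ 1 ∧ ((G.odeg v = 1 ∧ G.deg v = 1) ∨ (G.odeg v < G.deg v ∧ G.deg v = 2))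

/-- the setoid identifying nodes connected by undirected edges -/
def usetoid (N : SDG V) : Setoid V :=
  ⟨Relation.EqvGen N.ustep, Relation.EqvGen.is_equivalence _⟩

/-- the edge relation of the contraction of `N`: the directed graph on the
quotient by undirected connectivity, with the directed edges of `N` -/
def crel (N : SDG V) (x y : Quotient N.usetoid) : Prop :=
  ∃ u v : V, (u, v) ∈ N.dir ∧ Quotient.mk N.usetoid u = x ∧ Quotient.mk N.usetoid v = y

/-! ### Auxiliary lemmas -/

lemma directs_refl (G : SDG V) : Directs G G :=
  ⟨subset_rfl, subset_rfl, fun _ he he' => (he' he).elim, fun _ hp hp' => (hp' hp).elim⟩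

lemma no_cycle_of_partner {N G : SDG V} (hG : RootedPartner G N) : ¬ G.HasDirCycle :=
  hG.1.2.1 G (directs_refl G) hG.2

lemma acyclic_of_directed {G : SDG V} (hd : G.IsDirected) (h : ¬ G.HasDirCycle) : G.Acyclic := by
  intro H hH _ hc
  have hdir : H.dir = G.dir := by
    apply Finset.Subset.antisymm
    · intro e he
      by_contra heG
      have h1 := (hH.2.2.1 e he heG).1
      rw [show G.undir = ∅ from hd] at h1
      exact absurd h1 (Finset.notMem_empty _)
    · exact hH.2.1
  obtain ⟨e, he, hr⟩ := hc
  exact h ⟨e, hdir ▸ he, ReflTransGen.mono (r := H.dstep) (p := G.dstep) (fun a b hab => show (a, b) ∈ G.dir from hdir ▸ hab) _ _ hr⟩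

lemma rtg_of_chain' {α : Type} {r : α → α → Prop} :
    ∀ (m : List α) {a b : α}, m.Chain' r → m.head? = some a → m.getLast? = some b →
      ReflTransGen r a b := by
  intro m
  induction m with
  | nil => intro a b _ h _; simp at h
  | cons x t ih =>
    intro a b hc h1 h2
    rw [List.head?_cons, Option.some_inj] at h1
    subst h1
    cases t with
    | nil => simp at h2; subst h2; exact ReflTransGen.refl
    | cons y t' =>
      rw [List.getLast?_cons_cons] at h2
      exact ReflTransGen.head (List.isChain_cons_cons.mp hc).1
        (ih (List.isChain_cons_cons.mp hc).2 rfl h2)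

lemma getLast?_suffix {α : Type} {s t : List α} {a b : α}
    (h : (s ++ a :: t).getLast? = some b) : (a :: t).getLast? = some b := by
  rw [List.getLast?_append] at h
  rw [List.getLast?_eq_getLast (l := a :: t) (by simp)] at h ⊢
  simpa using h

lemma rtg_of_mem_chain' {α : Type} {r : α → α → Prop} {m : List α} {a b : α}
    (hc : m.Chain' r) (ha : a ∈ m) (hb : m.getLast? = some b) : ReflTransGen r a b := by
  obtain ⟨s, t, rfl⟩ := List.append_of_mem ha
  exact rtg_of_chain' _ (hc.suffix ⟨s, rfl⟩) rfl (getLast?_suffix hb)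

lemma exists_nodup_path {α : Type} {r : α → α → Prop} {a b : α} (h : ReflTransGen r a b) :
    ∃ m : List α, m.Chain' r ∧ m.head? = some a ∧ m.getLast? = some b ∧ m.Nodup := by
  induction h using ReflTransGen.head_induction_on with
  | refl => exact ⟨[b], List.isChain_singleton b, rfl, rfl, by simp⟩
  | @head a c hac hcb ih =>
    obtain ⟨m, hc, h1, h2, hnd⟩ := ih
    by_cases ham : a ∈ m
    · obtain ⟨s, t, rfl⟩ := List.append_of_mem ham
      exact ⟨a :: t, hc.suffix ⟨s, rfl⟩, rfl, getLast?_suffix h2,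
        (List.suffix_append s (a :: t)).sublist.nodup hnd⟩
    · cases m with
      | nil => simp at h1
      | cons c' t' =>
        rw [List.head?_cons, Option.some_inj] at h1
        have hac' : r a c' := by rwa [h1]
        exact ⟨a :: c' :: t', List.isChain_cons_cons.mpr ⟨hac', hc⟩, rfl,
          by rw [List.getLast?_cons_cons]; exact h2, List.nodup_cons.mpr ⟨ham, hnd⟩⟩

lemma adj_no_conflict {α : Type} {m : List α} (hnd : m.Nodup) {i j : ℕ} {a b : α}
    (hi : m[i]? = some a) (hi1 : m[i+1]? = some b)
    (hj : m[j]? = some b) (hj1 : m[j+1]? = some a) : a = b := by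
  by_contra hab
  have hil : i < m.length := (List.getElem?_eq_some_iff.mp hi).1
  have hjl : j < m.length := (List.getElem?_eq_some_iff.mp hj).1
  have h1 : i = j + 1 := (List.getElem?_inj hil hnd).mp (hi.trans hj1.symm)
  have h2 : j = i + 1 := (List.getElem?_inj hjl hnd).mp (hj.trans hi1.symm)
  omega

lemma ideg_eq_zero_iff {G : SDG V} {x : V} : G.ideg x = 0 ↔ ∀ e ∈ G.dir, e.2 ≠ x := by
  rw [ideg, Finset.card_eq_zero, Finset.filter_eq_empty_iff]

lemma ideg_le_one_unique {G : SDG V} {x : V} (h : G.ideg x ≤ 1) {a b : V}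
    (ha : (a, x) ∈ G.dir) (hb : (b, x) ∈ G.dir) : a = b := by
  have := Finset.card_le_one.mp h (a, x) (Finset.mem_filter.mpr ⟨ha, rfl⟩)
    (b, x) (Finset.mem_filter.mpr ⟨hb, rfl⟩)
  exact congrArg Prod.fst this

/-- No semidirected cycle through a directed edge in an acyclic SDG. -/
lemma no_sdir_cycle {N : SDG V} (hP : N.Proper) (hA : N.Acyclic) :
    ∀ e ∈ N.dir, ¬ N.sreach e.2 e.1 := by
  classical
  rintro ⟨w, v⟩ he hr
  obtain ⟨m, hc, h1, h2, hnd⟩ := exists_nodup_path hr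
  set zp := m.zip m.tail with hzp
  set o : Sym2 V → V × V := fun p =>
    if h : ∃ q ∈ zp, s(q.1, q.2) = p then h.choose else p.out with ho
  have hso : ∀ p : Sym2 V, s((o p).1, (o p).2) = p := by
    intro p
    by_cases h : ∃ q ∈ zp, s(q.1, q.2) = p
    · simp only [ho, dif_pos h]; exact h.choose_spec.2
    · simp only [ho, dif_neg h]; conv_rhs => rw [← p.out_eq]
  set G : SDG V := ⟨∅, N.dir ∪ N.undir.image o⟩ with hG
  have hGdir : Directs N G := by
    refine ⟨Finset.empty_subset _, Finset.subset_union_left, ?_, ?_⟩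
    · intro e heG hn
      rcases Finset.mem_union.mp heG with h | h
      · exact absurd h hn
      · obtain ⟨p, hp, rfl⟩ := Finset.mem_image.mp h
        exact ⟨(hso p).symm ▸ hp, Finset.notMem_empty _⟩
    · intro p hp _
      have honotdir : o p ∉ N.dir := fun h => hP.2.2 (o p) h ((hso p).symm ▸ hp)
      refine ⟨o p, ⟨Finset.mem_union_right _ (Finset.mem_image_of_mem o hp), honotdir, hso p⟩, ?_⟩
      rintro e' ⟨he', hn', hs'⟩
      rcases Finset.mem_union.mp he' with h | h
      · exact absurd h hn'
      · obtain ⟨p', hp', rfl⟩ := Finset.mem_image.mp h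
        rw [show p' = p from (hso p').symm.trans hs']
  have hkey : ∀ (i : ℕ) (a b : V), m[i]? = some a → m[i+1]? = some b → (a, b) ∈ G.dir := by
    intro i a b hia hib
    have hmem : (a, b) ∈ zp := by
      rw [List.mem_iff_getElem?]
      exact ⟨i, List.getElem?_zip_eq_some.mpr ⟨hia, by rw [List.getElem?_tail]; exact hib⟩⟩
    have hilen : i + 1 < m.length := (List.getElem?_eq_some_iff.mp hib).1
    have hstep : N.sstep a b := by
      have hcc := List.isChain_iff_getElem.mp hc i (by omega)
      rwa [(List.getElem?_eq_some_iff.mp hia).2, (List.getElem?_eq_some_iff.mp hib).2] at hcc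
    rcases hstep with h | h
    · exact Finset.mem_union_left _ h
    · -- undirected step: the orientation picks (a, b)
      have hex : ∃ q ∈ zp, s(q.1, q.2) = s(a, b) := ⟨(a, b), hmem, rfl⟩
      have hoq : o s(a, b) = hex.choose := by simp only [ho, dif_pos hex]
      have hspec := hex.choose_spec
      have hq : hex.choose = (a, b) := by
        rcases Sym2.eq_iff.mp hspec.2 with ⟨h1, h2⟩ | ⟨h1, h2⟩
        · exact Prod.ext h1 h2
        · -- choose = (b, a); conflict with nodup
          have hchoose : hex.choose = (b, a) := Prod.ext h1 h2
          have hmem' : (b, a) ∈ zp := hchoose ▸ hspec.1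
          obtain ⟨j, hj⟩ := List.mem_iff_getElem?.mp hmem'
          obtain ⟨hjb, hja⟩ := List.getElem?_zip_eq_some.mp hj
          rw [List.getElem?_tail] at hja
          obtain ⟨k, hk⟩ := List.mem_iff_getElem?.mp hmem
          obtain ⟨hka, hkb⟩ := List.getElem?_zip_eq_some.mp hk
          rw [List.getElem?_tail] at hkb
          have hab : a = b := adj_no_conflict hnd hka hkb hjb hja
          rw [hchoose, hab]
      have : o s(a, b) = (a, b) := hoq.trans hq
      exact Finset.mem_union_right _ (this ▸ Finset.mem_image_of_mem o h)
  have hchainG : m.Chain' G.dstep := by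
    refine List.isChain_iff_getElem.mpr ?_
    intro i hilt
    exact hkey i _ _ (List.getElem?_eq_getElem (by omega)) (List.getElem?_eq_getElem (by omega))
  have hreach : G.dreach v w := rtg_of_chain' m hchainG h1 h2
  exact hA G hGdir rfl ⟨(w, v), Finset.mem_union_left _ he, hreach⟩

lemma sreach_of_ustep {N : SDG V} {a b : V} (h : s(a, b) ∈ N.undir) : N.sreach a b :=
  ReflTransGen.single (Or.inr h)

lemma inRoot_of_mutual {N : SDG V} {a b : V} (ha : InRootComp N a)
    (hab : N.sreach a b) (hba : N.sreach b a) : InRootComp N b :=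
  fun z hz => hba.trans (ha z (hz.trans hba))

lemma inRoot_ustep {N : SDG V} {a b : V} (ha : InRootComp N a) (h : s(a, b) ∈ N.undir) :
    InRootComp N b := by
  have h' : s(b, a) ∈ N.undir := by rwa [Sym2.eq_swap]
  exact inRoot_of_mutual ha (sreach_of_ustep h) (sreach_of_ustep h')

lemma ideg_zero_root {N : SDG V} (hP : N.Proper) (hA : N.Acyclic) {x : V}
    (hx : InRootComp N x) : N.ideg x = 0 := by
  rw [ideg_eq_zero_iff]
  rintro ⟨a, c⟩ he (rfl : c = x)
  exact no_sdir_cycle hP hA (a, c) he (hx a (ReflTransGen.single (Or.inl he)))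

lemma root_in_edge {N G : SDG V} (hP : N.Proper) (hA : N.Acyclic) (hG : RootedPartner G N)
    {x w : V} (hx : InRootComp N x) (he : (w, x) ∈ G.dir) :
    (w, x) ∉ N.dir ∧ s(w, x) ∈ N.undir ∧ InRootComp N w := by
  have hnd : (w, x) ∉ N.dir := fun h =>
    ideg_eq_zero_iff.mp (ideg_zero_root hP hA hx) (w, x) h rfl
  have hundir : s(w, x) ∈ N.undir := (hG.1.1.2.2.1 (w, x) he hnd).1
  refine ⟨hnd, hundir, inRoot_ustep hx ?_⟩
  rwa [Sym2.eq_swap]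

lemma root_ideg_le_one {N G : SDG V} (hP : N.Proper) (hA : N.Acyclic)
    (hG : RootedPartner G N) {x : V} (hx : InRootComp N x) : G.ideg x ≤ 1 := by
  by_contra h
  push_neg at h
  obtain ⟨e, he⟩ := Finset.card_pos.mp (show 0 < G.ideg x by omega)
  have heG := (Finset.mem_filter.mp he).1
  have hex : e.2 = x := (Finset.mem_filter.mp he).2
  have hhyb : e ∈ G.hybridEdges := Finset.mem_filter.mpr ⟨heG, by rw [hex]; omega⟩
  rw [hG.1.2.2] at hhyb
  have heN : e ∈ N.dir := (Finset.mem_filter.mp hhyb).1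
  exact (root_in_edge hP hA hG hx (show (e.1, x) ∈ G.dir from hex ▸ heG)).1 (hex ▸ heN)

/-- Flipping an edge out of a root of a rooted partner. -/
lemma flip_root {N G : SDG V} (hG : RootedPartner G N)
    {r x : V} (hrx : (r, x) ∈ G.dir) (hr0 : G.ideg r = 0) (hne : r ≠ x)
    (hnotN : (r, x) ∉ N.dir) (hux : ∀ w, (w, x) ∈ G.dir → w = r) :
    ∃ G' : SDG V, RootedPartner G' N ∧ G'.dir = insert (x, r) (G.dir.erase (r, x)) ∧
      G'.ideg x = 0 := by
  classical
  obtain ⟨⟨hD, hA, hH⟩, hI⟩ := hG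
  have hIe : G.undir = ∅ := hI
  set G' : SDG V := ⟨∅, insert (x, r) (G.dir.erase (r, x))⟩ with hG'
  have hcyc : ¬ G.HasDirCycle := hA G (directs_refl G) hI
  have hxr : (x, r) ∉ G.dir := fun h => hcyc ⟨(r, x), hrx, ReflTransGen.single h⟩
  have hsu : s(r, x) ∈ N.undir := (hD.2.2.1 (r, x) hrx hnotN).1
  have hr0' : ∀ e ∈ G.dir, e.2 ≠ r := ideg_eq_zero_iff.mp hr0
  have hx0 : ∀ e ∈ G'.dir, e.2 ≠ x := by
    rintro ⟨a, c⟩ he (rfl : c = x)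
    rcases Finset.mem_insert.mp he with h | h
    · exact hne (congrArg Prod.snd h).symm
    · exact (Finset.mem_erase.mp h).1
        (by rw [hux a (Finset.mem_erase.mp h).2])
  have hstep : ∀ a c : V, a ≠ x → (a, c) ∈ G'.dir → (a, c) ∈ G.dir.erase (r, x) ∧ c ≠ x := by
    intro a c hax h
    rcases Finset.mem_insert.mp h with h | h
    · exact absurd (congrArg Prod.fst h) hax
    · refine ⟨h, fun hc => ?_⟩
      subst hc
      exact (Finset.mem_erase.mp h).1 (by rw [hux a (Finset.mem_erase.mp h).2])
  have hreach : ∀ a b : V, ReflTransGen G'.dstep a b → a ≠ x → ReflTransGen G.dstep a b := by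
    intro a b h
    induction h using ReflTransGen.head_induction_on with
    | refl => intro _; exact ReflTransGen.refl
    | @head a' c h1 _ ih =>
      intro hax
      obtain ⟨hG1, hcx⟩ := hstep a' c hax h1
      exact ReflTransGen.head (Finset.mem_erase.mp hG1).2 (ih hcx)
  have hnoreach : ∀ a, ReflTransGen G'.dstep a x → a = x := by
    intro a h
    rcases h.cases_tail with h' | ⟨c, _, hcx⟩
    · exact h'.symm
    · exact absurd rfl (hx0 (c, x) hcx)
  have hcyc' : ¬ G'.HasDirCycle := by
    rintro ⟨⟨a, c⟩, he, hr'⟩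
    rcases Finset.mem_insert.mp he with h | h
    · have h1 : a = x := congrArg Prod.fst h
      have h2 : c = r := congrArg Prod.snd h
      rw [h1, h2] at hr'
      exact hne (hnoreach r hr')
    · have hin := (Finset.mem_erase.mp h).2
      have h2x : c ≠ x := fun hc => (Finset.mem_erase.mp h).1
        (by subst hc; rw [hux a hin])
      exact hcyc ⟨(a, c), hin, hreach c a hr' h2x⟩
  have idegx : G'.ideg x = 0 := ideg_eq_zero_iff.mpr hx0
  have idegxG : G.ideg x ≤ 1 := by
    apply Finset.card_le_one.mpr
    intro e he e' he'
    have h1 := Finset.mem_filter.mp he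
    have h1' := Finset.mem_filter.mp he'
    have k : e = (r, x) := Prod.ext
      (hux e.1 (by have hh := h1.1; rwa [show e = (e.1, e.2) from rfl, h1.2] at hh)) h1.2
    have k' : e' = (r, x) := Prod.ext
      (hux e'.1 (by have hh := h1'.1; rwa [show e' = (e'.1, e'.2) from rfl, h1'.2] at hh)) h1'.2
    rw [k, k']
  have idegr : G'.ideg r = 1 := by
    have : G'.dir.filter (fun e => e.2 = r) = {(x, r)} := by
      ext ⟨a, c⟩
      simp only [Finset.mem_filter, Finset.mem_singleton]
      constructor
      · rintro ⟨he, (rfl : c = r)⟩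
        rcases Finset.mem_insert.mp he with h | h
        · exact h
        · exact absurd rfl (hr0' (a, c) (Finset.mem_erase.mp h).2)
      · rintro h
        have h1 : a = x := congrArg Prod.fst h
        have h2 : c = r := congrArg Prod.snd h
        rw [h1, h2]
        exact ⟨Finset.mem_insert_self _ _, rfl⟩
    rw [ideg, this, Finset.card_singleton]
  have idegother : ∀ y, y ≠ x → y ≠ r → G'.ideg y = G.ideg y := by
    intro y hyx hyr
    rw [ideg, ideg]
    congr 1
    ext ⟨a, c⟩
    simp only [hG', Finset.mem_filter, Finset.mem_insert, Finset.mem_erase]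
    constructor
    · rintro ⟨h | ⟨_, h⟩, h2⟩
      · exact absurd (h2.symm.trans (congrArg Prod.snd h)) hyr
      · exact ⟨h, h2⟩
    · rintro ⟨h, h2⟩
      refine ⟨Or.inr ⟨fun hh => ?_, h⟩, h2⟩
      exact hyx (h2.symm.trans (congrArg Prod.snd hh))
  have hhyb : G'.hybridEdges = G.hybridEdges := by
    ext ⟨a, c⟩
    simp only [hybridEdges, Finset.mem_filter]
    constructor
    · rintro ⟨he, h2⟩
      rcases Finset.mem_insert.mp he with h | h
      · have hcr : c = r := congrArg Prod.snd h
        rw [hcr, idegr] at h2; omega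
      · have hin := (Finset.mem_erase.mp h).2
        have hcx : c ≠ x := fun hc => (Finset.mem_erase.mp h).1
          (by subst hc; rw [hux a hin])
        by_cases hcr : c = r
        · exact absurd hcr (hr0' (a, c) hin)
        · exact ⟨hin, by rwa [idegother c hcx hcr] at h2⟩
    · rintro ⟨he, h2⟩
      have hcx : c ≠ x := by
        rintro rfl
        omega
      have hcr : c ≠ r := hr0' (a, c) he
      have hne' : (a, c) ≠ (r, x) := fun hh => hcx (congrArg Prod.snd hh)
      exact ⟨Finset.mem_insert_of_mem (Finset.mem_erase.mpr ⟨hne', he⟩),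
        by rwa [idegother c hcx hcr]⟩
  have hxrN : (x, r) ∉ N.dir := fun h => hxr (hD.2.1 h)
  have hD' : Directs N G' := by
    refine ⟨Finset.empty_subset _, ?_, ?_, ?_⟩
    · intro e he
      exact Finset.mem_insert_of_mem
        (Finset.mem_erase.mpr ⟨fun hh => hnotN (hh ▸ he), hD.2.1 he⟩)
    · rintro e he hn
      rcases Finset.mem_insert.mp he with rfl | h
      · exact ⟨by rw [Sym2.eq_swap]; exact hsu, Finset.notMem_empty _⟩
      · exact ⟨(hD.2.2.1 e (Finset.mem_erase.mp h).2 hn).1, Finset.notMem_empty _⟩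
    · intro p hp _
      by_cases hpe : p = s(r, x)
      · subst hpe
        refine ⟨(x, r), ⟨Finset.mem_insert_self _ _, hxrN, by rw [Sym2.eq_swap]⟩, ?_⟩
        rintro ⟨a, c⟩ ⟨he, hn, hs⟩
        rcases Finset.mem_insert.mp he with h | h
        · exact h
        · obtain ⟨e₀, he₀, hu₀⟩ := hD.2.2.2 s(r, x) hsu
            (by rw [hIe]; exact Finset.notMem_empty _)
          have h1 := hu₀ (a, c) ⟨(Finset.mem_erase.mp h).2, hn, hs⟩
          have h2 := hu₀ (r, x) ⟨hrx, hnotN, rfl⟩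
          exact absurd (h1.trans h2.symm) (Finset.mem_erase.mp h).1
      · obtain ⟨e₀, ⟨he₀, hn₀, hs₀⟩, hu₀⟩ := hD.2.2.2 p hp
          (by rw [hIe]; exact Finset.notMem_empty _)
        have hne₀ : e₀ ≠ (r, x) := fun hh => hpe (by rw [← hs₀, hh])
        refine ⟨e₀, ⟨Finset.mem_insert_of_mem (Finset.mem_erase.mpr ⟨hne₀, he₀⟩), hn₀, hs₀⟩, ?_⟩
        rintro ⟨a, c⟩ ⟨he', hn', hs'⟩
        rcases Finset.mem_insert.mp he' with h | h
        · have h1 : a = x := congrArg Prod.fst h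
          have h2 : c = r := congrArg Prod.snd h
          rw [h1, h2, Sym2.eq_swap] at hs'
          exact absurd hs'.symm hpe
        · exact hu₀ (a, c) ⟨(Finset.mem_erase.mp h).2, hn', hs'⟩
  exact ⟨G', ⟨⟨hD', acyclic_of_directed rfl hcyc', hhyb.trans hH⟩, rfl⟩, rfl, idegx⟩

lemma exists_root_chain {N G : SDG V} (hP : N.Proper) (hA : N.Acyclic)
    (hG : RootedPartner G N) {b : V} (hb : InRootComp N b) :
    ∃ l : List V, l.Chain' G.dstep ∧ l.getLast? = some b ∧ l.Nodup ∧
      (∀ y ∈ l, InRootComp N y) ∧ ∀ r, l.head? = some r → G.ideg r = 0 := by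
  classical
  have hcyc : ¬ G.HasDirCycle := no_cycle_of_partner hG
  suffices H : ∀ (n : ℕ) (b : V), InRootComp N b →
      (G.dir.filter (fun e => G.dreach e.2 b)).card = n →
      ∃ l : List V, l.Chain' G.dstep ∧ l.getLast? = some b ∧ l.Nodup ∧
        (∀ y ∈ l, InRootComp N y) ∧ ∀ r, l.head? = some r → G.ideg r = 0 by
    exact H _ b hb rfl
  intro n
  induction n using Nat.strong_induction_on with
  | _ n ih =>
    intro b hb hcard
    by_cases h0 : G.ideg b = 0
    · refine ⟨[b], List.isChain_singleton b, rfl, List.nodup_singleton b, ?_, ?_⟩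
      · intro y hy; rw [List.mem_singleton] at hy; rwa [hy]
      · intro r hr; rw [List.head?_cons, Option.some_inj] at hr; rwa [hr] at h0
    · obtain ⟨e, he⟩ := Finset.card_pos.mp (Nat.pos_of_ne_zero h0)
      have heG := (Finset.mem_filter.mp he).1
      have heb : e.2 = b := (Finset.mem_filter.mp he).2
      have hwb : (e.1, b) ∈ G.dir := by
        have hh := heG; rwa [show e = (e.1, e.2) from rfl, heb] at hh
      have hw : InRootComp N e.1 := (root_in_edge hP hA hG hb hwb).2.2
      have hsub : G.dir.filter (fun f => G.dreach f.2 e.1) ⊂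
          G.dir.filter (fun f => G.dreach f.2 b) := by
        constructor
        · intro f hf
          have h1 := Finset.mem_filter.mp hf
          exact Finset.mem_filter.mpr ⟨h1.1, h1.2.tail hwb⟩
        · intro hcon
          have h1 : (e.1, b) ∈ G.dir.filter (fun f => G.dreach f.2 b) :=
            Finset.mem_filter.mpr ⟨hwb, ReflTransGen.refl⟩
          have h2 := (Finset.mem_filter.mp (hcon h1)).2
          exact hcyc ⟨(e.1, b), hwb, h2⟩
      have hlt : (G.dir.filter (fun f => G.dreach f.2 e.1)).card < n :=
        hcard ▸ Finset.card_lt_card hsub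
      obtain ⟨l, hc, hl, hnd, hroot, hhead⟩ := ih _ hlt e.1 hw rfl
      have hbnl : b ∉ l := by
        intro hbl
        exact hcyc ⟨(e.1, b), hwb, rtg_of_mem_chain' hc hbl hl⟩
      have hlne : l ≠ [] := by rintro rfl; simp at hl
      refine ⟨l ++ [b], ?_, ?_, ?_, ?_, ?_⟩
      · apply List.isChain_append.mpr
        refine ⟨hc, List.isChain_singleton b, ?_⟩
        intro y hy z hz
        rw [List.head?_cons, Option.mem_def, Option.some_inj] at hz
        rw [Option.mem_def, hl, Option.some_inj] at hy
        rw [hy, hz] at hwb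
        exact hwb
      · rw [List.getLast?_append]; rfl
      · rw [List.nodup_append]
        refine ⟨hnd, List.nodup_singleton b, ?_⟩
        intro y hy z hz hyz
        rw [List.mem_singleton] at hz
        exact hbnl (by rw [← hz, ← hyz]; exact hy)
      · intro y hy
        rcases List.mem_append.mp hy with h | h
        · exact hroot y h
        · rw [List.mem_singleton] at h; rwa [h]
      · intro r hr
        obtain ⟨c, t, rfl⟩ := List.exists_cons_of_ne_nil hlne
        rw [List.cons_append, List.head?_cons, Option.some_inj] at hr
        exact hhead r (by rw [List.head?_cons, hr])

lemma reroot {N : SDG V} (hP : N.Proper) (hA : N.Acyclic) :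
    ∀ (l : List V) (G : SDG V), RootedPartner G N → l.Chain' G.dstep → l.Nodup →
      (∀ y ∈ l, InRootComp N y) → (∀ r, l.head? = some r → G.ideg r = 0) →
      ∀ b, l.getLast? = some b →
      ∃ G' : SDG V, RootedPartner G' N ∧ G'.ideg b = 0 ∧
        ∀ e ∈ G.dir, e.2 ∉ l → e ∈ G'.dir := by
  intro l
  induction l with
  | nil => intro G _ _ _ _ _ b hb; simp at hb
  | cons x t ih =>
    intro G hG hc hnd hroot hhead b hb
    cases t with
    | nil =>
      rw [List.getLast?_singleton, Option.some_inj] at hb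
      exact ⟨G, hG, by rw [← hb]; exact hhead x rfl, fun e he _ => he⟩
    | cons y t' =>
      have hxy : G.dstep x y := (List.isChain_cons_cons.mp hc).1
      have hx0 : G.ideg x = 0 := hhead x rfl
      have hyR : InRootComp N y := hroot y (by simp)
      have hcycG : ¬ G.HasDirCycle := no_cycle_of_partner hG
      have hxny : x ≠ y := by
        rintro rfl
        exact hcycG ⟨(x, x), hxy, ReflTransGen.refl⟩
      obtain ⟨hnotN, hsu, _⟩ := root_in_edge hP hA hG hyR hxy
      have hy1 : G.ideg y ≤ 1 := root_ideg_le_one hP hA hG hyR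
      have hux : ∀ w, (w, y) ∈ G.dir → w = x := fun w hw => ideg_le_one_unique hy1 hw hxy
      obtain ⟨G₂, hG₂, hdir₂, hideg₂⟩ := flip_root hG hxy hx0 hxny hnotN hux
      have hnd' : (y :: t').Nodup := hnd.of_cons
      have hynt : y ∉ t' := (List.nodup_cons.mp hnd').1
      have hc₂ : (y :: t').Chain' G₂.dstep := by
        simp only [List.Chain'] at hc ⊢
        rw [List.isChain_iff_getElem] at hc ⊢
        intro i hilt
        have hlt' : i < (y :: t').length - 1 := by omega
        have hi2 : i + 1 < (y :: t').length := by
          simp only [List.length_cons] at hlt' ⊢; omega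
        have hcc := hc (i + 1) (by simp only [List.length_cons] at hlt' ⊢; omega)
        rw [List.getElem_cons_succ, List.getElem_cons_succ] at hcc
        have hzt : (y :: t')[i + 1] ∈ t' := by
          rw [List.getElem_cons_succ]; exact List.getElem_mem ..
        have hgoal : ((y :: t')[i], (y :: t')[i + 1]) ∈ G₂.dir := by
          rw [hdir₂]
          apply Finset.mem_insert_of_mem
          apply Finset.mem_erase.mpr
          refine ⟨fun hh => hynt ?_, hcc⟩
          have h2 := congrArg Prod.snd hh
          simp only at h2
          rw [h2] at hzt
          exact hzt
        exact hgoal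
      have hroot' : ∀ z ∈ y :: t', InRootComp N z := fun z hz =>
        hroot z (List.mem_cons_of_mem x hz)
      have hhead' : ∀ r, (y :: t').head? = some r → G₂.ideg r = 0 := by
        intro r hr
        rw [List.head?_cons, Option.some_inj] at hr
        rwa [hr] at hideg₂
      have hb' : (y :: t').getLast? = some b := by rwa [List.getLast?_cons_cons] at hb
      obtain ⟨G', hG', hb0, hpres⟩ := ih G₂ hG₂ hc₂ hnd' hroot' hhead' b hb'
      refine ⟨G', hG', hb0, ?_⟩
      intro e he hel
      have hey : e.2 ≠ y := fun hh => hel (by rw [hh]; simp)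
      apply hpres
      · rw [hdir₂]
        apply Finset.mem_insert_of_mem
        exact Finset.mem_erase.mpr ⟨fun hh => hey (congrArg Prod.snd hh), he⟩
      · intro h2
        exact hel (List.mem_cons_of_mem x h2)

lemma exists_partner_dir {N : SDG V} (hP : N.Proper) (hN : IsNetwork N)
    {a b : V} (hab : s(a, b) ∈ N.undir) (ha : InRootComp N a) :
    ∃ G : SDG V, RootedPartner G N ∧ (a, b) ∈ G.dir := by
  obtain ⟨hA, G₀, hG₀⟩ := hN
  have hbR : InRootComp N b := inRoot_ustep ha hab
  have hanb : a ≠ b := fun h => (hP.1 _ hab) (Sym2.mk_isDiag_iff.mpr h)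
  have hG₀u : G₀.undir = ∅ := hG₀.2
  obtain ⟨e₀, ⟨he₀, hn₀, hs₀⟩, _⟩ := hG₀.1.1.2.2.2 s(a, b) hab
    (by rw [hG₀u]; exact Finset.notMem_empty _)
  rcases Sym2.eq_iff.mp hs₀ with ⟨h1, h2⟩ | ⟨h1, h2⟩
  · exact ⟨G₀, hG₀, by rw [show ((a : V), b) = e₀ from (Prod.ext h1 h2).symm]; exact he₀⟩
  · have hba : (b, a) ∈ G₀.dir := by
      rw [show ((b : V), a) = e₀ from (Prod.ext h1 h2).symm]; exact he₀
    obtain ⟨l, hcl, hl, hnd, hroot, hhead⟩ := exists_root_chain hP hA hG₀ hbR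
    obtain ⟨G', hG', hb0, hpres⟩ := reroot hP hA l G₀ hG₀ hcl hnd hroot hhead b hl
    have hanl : a ∉ l := by
      intro hal
      exact (no_cycle_of_partner hG₀) ⟨(b, a), hba, rtg_of_mem_chain' hcl hal hl⟩
    have hba' : (b, a) ∈ G'.dir := hpres (b, a) hba hanl
    have hbaN : (b, a) ∉ N.dir := fun h => hP.2.2 (b, a) h (by rwa [Sym2.eq_swap])
    have ha1 : G'.ideg a ≤ 1 := root_ideg_le_one hP hA hG' ha
    have hux : ∀ w, (w, a) ∈ G'.dir → w = b := fun w hw => ideg_le_one_unique ha1 hw hba'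
    obtain ⟨G'', hG'', hdir'', _⟩ := flip_root hG' hba' hb0 (Ne.symm hanb) hbaN hux
    exact ⟨G'', hG'', by rw [hdir'']; exact Finset.mem_insert_self _ _⟩

theorem statement_7 {V : Type} [DecidableEq V] (N : SDG V) (hP : N.Proper)
    (hN : IsNetwork N) (u v : V) (he : s(u, v) ∈ N.undir) (hu : InRootComp N u) :
    IsNetwork ⟨N.undir.erase s(u, v), insert (u, v) N.dir⟩ ∧
      PhyloCompat ⟨N.undir.erase s(u, v), insert (u, v) N.dir⟩ N := by
  classical
  have hA : N.Acyclic := hN.1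
  set N' : SDG V := ⟨N.undir.erase s(u, v), insert (u, v) N.dir⟩ with hN'def
  have huv : u ≠ v := fun h => hP.1 _ he (Sym2.mk_isDiag_iff.mpr h)
  have hvus : s(v, u) ∈ N.undir := by rwa [Sym2.eq_swap]
  have hvR : InRootComp N v := inRoot_ustep hu he
  have hidegv : N.ideg v = 0 := ideg_zero_root hP hA hvR
  have huvN : (u, v) ∉ N.dir := fun h => hP.2.2 (u, v) h he
  have hvuN : (v, u) ∉ N.dir := fun h => hP.2.2 (v, u) h hvus
  have hideg' : ∀ x, N'.ideg x = if x = v then 1 else N.ideg x := by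
    intro x
    show (Finset.filter (fun e => e.2 = x) (insert (u, v) N.dir)).card = _
    rw [Finset.filter_insert]
    by_cases hx : x = v
    · subst hx
      rw [if_pos rfl, if_pos rfl,
        Finset.card_insert_of_notMem (fun h => huvN (Finset.mem_filter.mp h).1)]
      have h0 : (N.dir.filter (fun e => e.2 = x)).card = 0 := hidegv
      omega
    · rw [if_neg (fun h => hx h.symm), if_neg hx]; rfl
  have hhyb : N'.hybridEdges = N.hybridEdges := by
    ext ⟨a, c⟩
    simp only [hybridEdges, Finset.mem_filter]
    constructor
    · rintro ⟨h1, h2⟩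
      rcases Finset.mem_insert.mp h1 with h | h
      · have hcv : c = v := congrArg Prod.snd h
        rw [hideg' c, if_pos hcv] at h2
        omega
      · have hcv : c ≠ v := fun hc => ideg_eq_zero_iff.mp hidegv (a, c) h hc
        rw [hideg' c, if_neg hcv] at h2
        exact ⟨h, h2⟩
    · rintro ⟨h1, h2⟩
      have hcv : c ≠ v := fun hc => ideg_eq_zero_iff.mp hidegv (a, c) h1 hc
      exact ⟨Finset.mem_insert_of_mem h1, by rw [hideg' c, if_neg hcv]; exact h2⟩
  have hDir : Directs N N' := by
    refine ⟨Finset.erase_subset _ _, Finset.subset_insert _ _, ?_, ?_⟩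
    · intro e heN' hn
      have heq : e = (u, v) := by
        rcases Finset.mem_insert.mp heN' with h | h
        · exact h
        · exact absurd h hn
      subst heq
      exact ⟨he, Finset.notMem_erase _ _⟩
    · intro p hp hpn
      have hpe : p = s(u, v) := by
        by_contra h
        exact hpn (Finset.mem_erase.mpr ⟨h, hp⟩)
      subst hpe
      refine ⟨(u, v), ⟨Finset.mem_insert_self _ _, huvN, rfl⟩, ?_⟩
      rintro e' ⟨he', hn', _⟩
      rcases Finset.mem_insert.mp he' with h | h
      · exact h
      · exact absurd h hn'
  have hAc' : N'.Acyclic := by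
    intro H hH hHd
    have hHu : H.undir = ∅ := hHd
    have hvuH : (v, u) ∉ H.dir := by
      intro h
      have h1 : (v, u) ∉ N'.dir := by
        intro h'
        rcases Finset.mem_insert.mp h' with h'' | h''
        · exact huv (congrArg Prod.snd h'')
        · exact hvuN h''
      have h2 := (hH.2.2.1 (v, u) h h1).1
      rw [Sym2.eq_swap] at h2
      exact Finset.notMem_erase _ _ h2
    refine hA H ⟨?_, ?_, ?_, ?_⟩ hHd
    · rw [hHu]; exact Finset.empty_subset _
    · exact fun e heN => hH.2.1 (Finset.mem_insert_of_mem heN)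
    · intro e heH hnN
      by_cases h' : e ∈ N'.dir
      · have heq : e = (u, v) := by
          rcases Finset.mem_insert.mp h' with h | h
          · exact h
          · exact absurd h hnN
        subst heq
        exact ⟨he, by rw [hHu]; exact Finset.notMem_empty _⟩
      · obtain ⟨h1, _⟩ := hH.2.2.1 e heH h'
        exact ⟨Finset.mem_of_mem_erase h1, by rw [hHu]; exact Finset.notMem_empty _⟩
    · intro p hp _
      by_cases hpe : p = s(u, v)
      · subst hpe
        refine ⟨(u, v), ⟨hH.2.1 (Finset.mem_insert_self _ _), huvN, rfl⟩, ?_⟩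
        rintro ⟨a, c⟩ ⟨he', _, hs'⟩
        rcases Sym2.eq_iff.mp hs' with ⟨h1, h2⟩ | ⟨h1, h2⟩
        · exact Prod.ext h1 h2
        · rw [show ((a : V), c) = (v, u) from Prod.ext h1 h2] at he'
          exact absurd he' hvuH
      · obtain ⟨e₀, ⟨h1, h2, h3⟩, hu₀⟩ := hH.2.2.2 p (Finset.mem_erase.mpr ⟨hpe, hp⟩)
          (by rw [hHu]; exact Finset.notMem_empty _)
        refine ⟨e₀, ⟨h1, fun hc => h2 (Finset.mem_insert_of_mem hc), h3⟩, ?_⟩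
        rintro e' ⟨he', hn', hs'⟩
        apply hu₀ e'
        refine ⟨he', ?_, hs'⟩
        intro h'
        rcases Finset.mem_insert.mp h' with h'' | h''
        · subst h''
          exact hpe hs'.symm
        · exact hn' h''
  obtain ⟨G, hG, hGuv⟩ := exists_partner_dir hP hN he hu
  have hGu : G.undir = ∅ := hG.2
  have hGvu : (v, u) ∉ G.dir := fun h =>
    (no_cycle_of_partner hG) ⟨(u, v), hGuv, ReflTransGen.single h⟩
  have hGD' : Directs N' G := by
    refine ⟨?_, ?_, ?_, ?_⟩
    · rw [hGu]; exact Finset.empty_subset _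
    · intro e he'
      rcases Finset.mem_insert.mp he' with rfl | h
      · exact hGuv
      · exact hG.1.1.2.1 h
    · intro e heG hn'
      have hnN : e ∉ N.dir := fun h => hn' (Finset.mem_insert_of_mem h)
      obtain ⟨h1, _⟩ := hG.1.1.2.2.1 e heG hnN
      refine ⟨Finset.mem_erase.mpr ⟨?_, h1⟩, by rw [hGu]; exact Finset.notMem_empty _⟩
      intro hs
      rcases Sym2.eq_iff.mp hs with ⟨h1', h2'⟩ | ⟨h1', h2'⟩
      · exact hn' (Finset.mem_insert.mpr (Or.inl (Prod.ext h1' h2')))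
      · rw [show e = (v, u) from Prod.ext h1' h2'] at heG
        exact hGvu heG
    · intro p hp _
      have hpN : p ∈ N.undir := Finset.mem_of_mem_erase hp
      have hpne : p ≠ s(u, v) := (Finset.mem_erase.mp hp).1
      obtain ⟨e₀, ⟨h1, h2, h3⟩, hu₀⟩ := hG.1.1.2.2.2 p hpN
        (by rw [hGu]; exact Finset.notMem_empty _)
      have hn₀' : e₀ ∉ N'.dir := by
        intro hc
        rcases Finset.mem_insert.mp hc with h'' | h''
        · exact hpne (by rw [← h3, h''])
        · exact h2 h''
      refine ⟨e₀, ⟨h1, hn₀', h3⟩, ?_⟩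
      rintro e' ⟨he', hn', hs'⟩
      exact hu₀ e' ⟨he', fun hc => hn' (Finset.mem_insert_of_mem hc), hs'⟩
  exact ⟨⟨hAc', G, ⟨⟨hGD', hG.1.2.1, hG.1.2.2.trans hhyb.symm⟩, hG.2⟩⟩, hDir, hAc', hhyb⟩


end SDG
end

section
/- Let N be a leaf-labeled network and v a node in the directed part of N. Then the set of directed paths starting at v is the same in every rooted partner G of N; in particular the μ-vector μ(v, G) (counting directed paths from v to each labeled leaf) does not depend on the choice of rooted partner G. -/
open Relation

namespace SDG

variable {V : Type} [DecidableEq V]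

/-! ### Auxiliary lemmas for statement_8 -/

lemma ndir_subset {G N : SDG V} (h : RootedPartner G N) : N.dir ⊆ G.dir := h.1.1.2.1

lemma new_mem_undir {G N : SDG V} (h : RootedPartner G N) {x y : V}
    (hx : (x, y) ∈ G.dir) (hn : (x, y) ∉ N.dir) : s(x, y) ∈ N.undir :=
  (h.1.1.2.2.1 (x, y) hx hn).1

lemma not_dir_of_undir {N : SDG V} (hP : N.Proper) {x y : V}
    (hu : s(x, y) ∈ N.undir) : (x, y) ∉ N.dir :=
  fun hd => hP.2.2 (x, y) hd hu

/-- In a rooted partner, every undirected edge of `N` receives some direction. -/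
lemma orient {G N : SDG V} (h : RootedPartner G N) {x y : V}
    (hu : s(x, y) ∈ N.undir) : (x, y) ∈ G.dir ∨ (y, x) ∈ G.dir := by
  have hemp : G.undir = ∅ := h.2
  have hne : s(x, y) ∉ G.undir := by rw [hemp]; exact Finset.notMem_empty _
  obtain ⟨⟨e1, e2⟩, ⟨he, _, hs⟩, _⟩ := h.1.1.2.2.2 _ hu hne
  rw [Sym2.eq_iff] at hs
  rcases hs with ⟨hx1, hy1⟩ | ⟨hx1, hy1⟩
  · subst hx1; subst hy1; exact Or.inl he
  · subst hx1; subst hy1; exact Or.inr he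

/-- A newly directed edge in a rooted partner points to a non-hybrid node. -/
lemma nonhyb {G N : SDG V} (h : RootedPartner G N) (hP : N.Proper) {x y : V}
    (hx : (x, y) ∈ G.dir) (hu : s(x, y) ∈ N.undir) : G.ideg y ≤ 1 := by
  by_contra hc
  push_neg at hc
  have hmem : (x, y) ∈ G.hybridEdges := Finset.mem_filter.2 ⟨hx, hc⟩
  rw [h.1.2.2] at hmem
  exact not_dir_of_undir hP hu (Finset.mem_filter.1 hmem).1

lemma ideg_ge_two {G : SDG V} {p q x : V} (hp : (p, x) ∈ G.dir)
    (hq : (q, x) ∈ G.dir) (hne : p ≠ q) : 2 ≤ G.ideg x := by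
  have h1 : 1 < (G.dir.filter fun e => e.2 = x).card :=
    Finset.one_lt_card.2 ⟨(p, x), Finset.mem_filter.2 ⟨hp, rfl⟩,
      (q, x), Finset.mem_filter.2 ⟨hq, rfl⟩, by simp [hne]⟩
  exact h1

lemma eq_of_ideg_le_one {G : SDG V} {p q x : V} (h : G.ideg x ≤ 1)
    (hp : (p, x) ∈ G.dir) (hq : (q, x) ∈ G.dir) : p = q := by
  have := Finset.card_le_one.1 h (p, x) (Finset.mem_filter.2 ⟨hp, rfl⟩)
    (q, x) (Finset.mem_filter.2 ⟨hq, rfl⟩)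
  exact congrArg Prod.fst this

/-- A rooted partner has no directed cycle. -/
lemma no_cycle {G N : SDG V} (h : RootedPartner G N) : ¬ G.HasDirCycle := by
  have hd : Directs G G :=
    ⟨subset_rfl, subset_rfl, fun e he hne => absurd he hne, fun p hp hnp => absurd hp hnp⟩
  exact h.1.2.1 G hd h.2

/-- one step along a formerly-undirected edge, as directed in `G` -/
def tstep (N G : SDG V) (x y : V) : Prop := (x, y) ∈ G.dir ∧ s(x, y) ∈ N.undir

/-- reachability along formerly-undirected edges, as directed in `G` -/
def treach (N G : SDG V) : V → V → Prop := ReflTransGen (tstep N G)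

/-- Any node `x` undirectedly connected to a node `b` with an incoming directed
edge of `N` is `tstep`-reachable from `b` in every rooted partner. -/
lemma ureach_to_treach {N G : SDG V} (hP : N.Proper) (h : RootedPartner G N)
    {a b x : V} (hab : (a, b) ∈ N.dir) (hu : N.ureach b x) : treach N G b x := by
  induction hu with
  | refl => exact Relation.ReflTransGen.refl
  | @tail p x hbp hstep ih =>
    rcases orient h hstep with hpx | hxp
    · exact ih.tail ⟨hpx, hstep⟩
    · have hsu : s(x, p) ∈ N.undir := by rwa [Sym2.eq_swap]
      have hle : G.ideg p ≤ 1 := nonhyb h hP hxp hsu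
      rcases Relation.ReflTransGen.cases_tail ih with heq | ⟨q, hbq, hqp⟩
      · subst heq
        have hax : a ≠ x := by
          intro he; subst he
          exact not_dir_of_undir hP hsu hab
        exact absurd (ideg_ge_two (ndir_subset h hab) hxp hax) (by omega)
      · have hqx : q = x := eq_of_ideg_le_one hle hqp.1 hxp
        exact hqx ▸ hbq

/-- Directions of formerly-undirected edges reachable from an "entry node" `b`
agree in all rooted partners. -/
lemma treach_transfer {N G1 G2 : SDG V} (hP : N.Proper)
    (h1 : RootedPartner G1 N) (h2 : RootedPartner G2 N) {a b x : V}
    (hab : (a, b) ∈ N.dir) (htr : treach N G1 b x) :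
    ∀ y, (x, y) ∈ G1.dir → s(x, y) ∈ N.undir → (x, y) ∈ G2.dir := by
  induction htr with
  | refl =>
    intro y hby hbu
    rcases orient h2 hbu with h | h
    · exact h
    · have hyb_undir : s(y, b) ∈ N.undir := by rwa [Sym2.eq_swap]
      have hay : a ≠ y := by
        intro he; subst he
        exact not_dir_of_undir hP hyb_undir hab
      have hge := ideg_ge_two (ndir_subset h2 hab) h hay
      have hle := nonhyb h2 hP h hyb_undir
      omega
  | @tail p x hbp hstep ih =>
    intro y hxy hxyu
    have hpx2 : (p, x) ∈ G2.dir := ih x hstep.1 hstep.2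
    rcases orient h2 hxyu with h | h
    · exact h
    · have hyx_undir : s(y, x) ∈ N.undir := by rwa [Sym2.eq_swap]
      have hne : p ≠ y := by
        intro he; subst he
        exact no_cycle h1 ⟨(p, x), hstep.1, Relation.ReflTransGen.single hxy⟩
      have hle := nonhyb h2 hP h hyx_undir
      have hge := ideg_ge_two hpx2 h hne
      omega

lemma ureach_symm {N : SDG V} {x y : V} (h : N.ureach x y) : N.ureach y x :=
  haveI : Std.Symm N.ustep := ⟨fun a b hab => by unfold ustep at *; rwa [Sym2.eq_swap]⟩
  Relation.ReflTransGen.symmetric.symm _ _ h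

lemma ureach_sreach {N : SDG V} {x y : V} (h : N.ureach x y) : N.sreach x y :=
  Relation.ReflTransGen.mono (fun _ _ hs => Or.inr hs) _ _ h

/-- A node outside root components has an entry node in its undirected component. -/
lemma exists_entry {N : SDG V} {u : V} (hu : ¬ InRootComp N u) :
    ∃ a b, (a, b) ∈ N.dir ∧ N.ureach b u := by
  simp only [InRootComp, not_forall] at hu
  obtain ⟨z, hzu, hnuz⟩ := hu
  have key : ∀ c, N.sreach z c → N.ureach z c ∨ ∃ a b, (a, b) ∈ N.dir ∧ N.ureach b c := by
    intro c h
    induction h with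
    | refl => exact Or.inl Relation.ReflTransGen.refl
    | @tail p d hzp hstep ih =>
      rcases hstep with hd | hus
      · exact Or.inr ⟨p, d, hd, Relation.ReflTransGen.refl⟩
      · rcases ih with hzp' | ⟨a, b, hab, hb⟩
        · exact Or.inl (hzp'.tail hus)
        · exact Or.inr ⟨a, b, hab, hb.tail hus⟩
  rcases key u hzu with h | h
  · exact absurd (ureach_sreach (ureach_symm h)) hnuz
  · exact h

lemma not_root_of_sreach {N : SDG V} {v u : V} (h : N.sreach v u)
    (hv : ¬ InRootComp N v) : ¬ InRootComp N u := by
  intro hu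
  exact hv fun w hwv => h.trans (hu w (hwv.trans h))

/-- Key lemma: edges out of nodes in the directed part agree in all rooted partners. -/
lemma edge_transfer {N G1 G2 : SDG V} (hP : N.Proper)
    (h1 : RootedPartner G1 N) (h2 : RootedPartner G2 N) {x y : V}
    (hx : ¬ InRootComp N x) (hxy : (x, y) ∈ G1.dir) : (x, y) ∈ G2.dir := by
  by_cases hn : (x, y) ∈ N.dir
  · exact ndir_subset h2 hn
  · have hu := new_mem_undir h1 hxy hn
    obtain ⟨a, b, hab, hbu⟩ := exists_entry hx
    exact treach_transfer hP h1 h2 hab (ureach_to_treach hP h1 hab hbu) y hxy hu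

lemma dstep_sstep {N G : SDG V} (h : RootedPartner G N) {x y : V}
    (hxy : (x, y) ∈ G.dir) : N.sstep x y := by
  by_cases hn : (x, y) ∈ N.dir
  · exact Or.inl hn
  · exact Or.inr (new_mem_undir h hxy hn)

lemma chain_transfer {N G1 G2 : SDG V} (hP : N.Proper)
    (h1 : RootedPartner G1 N) (h2 : RootedPartner G2 N) (l : List V) :
    ∀ x, ¬ InRootComp N x → List.Chain G1.dstep x l → List.Chain G2.dstep x l := by
  induction l with
  | nil => intro x _ _; exact List.Chain.nil
  | cons y t ih =>
    intro x hx h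
    obtain ⟨hxy, ht⟩ := List.isChain_cons_cons.1 h
    exact List.isChain_cons_cons.2 ⟨(edge_transfer hP h1 h2 hx hxy),
        (ih y (not_root_of_sreach (Relation.ReflTransGen.single (dstep_sstep h1 hxy)) hx) ht)⟩

lemma startPaths_subset {N G1 G2 : SDG V} (hP : N.Proper)
    (h1 : RootedPartner G1 N) (h2 : RootedPartner G2 N) {v : V}
    (hv : ¬ InRootComp N v) : startPaths G1 v ⊆ startPaths G2 v := by
  rintro l ⟨hh, hc⟩
  refine ⟨hh, ?_⟩
  match l, hh, hc with
  | (a :: t), hh, hc =>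
    have ha : a = v := by simpa using hh
    subst ha
    exact chain_transfer hP h1 h2 t a hv hc

theorem statement_8 {V : Type} [DecidableEq V] (N : SDG V) (hP : N.Proper)
    (hL : LNetwork N) (v : V) (hv : ¬ InRootComp N v)
    (G1 G2 : SDG V) (h1 : RootedPartner G1 N) (h2 : RootedPartner G2 N) :
    startPaths G1 v = startPaths G2 v ∧
      ∀ x, IsUnrootedLeaf N x → pathCount G1 v x = pathCount G2 v x := by
  have hEq : startPaths G1 v = startPaths G2 v :=
    Set.Subset.antisymm (startPaths_subset hP h1 h2 hv) (startPaths_subset hP h2 h1 hv)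
  refine ⟨hEq, fun x _ => ?_⟩
  have hset : {l : List V | IsDPathList G1 v x l} = {l : List V | IsDPathList G2 v x l} := by
    ext l
    constructor
    · rintro ⟨hh, hl, hc⟩
      have hm : l ∈ startPaths G2 v := hEq ▸ (show l ∈ startPaths G1 v from ⟨hh, hc⟩)
      exact ⟨hh, hl, hm.2⟩
    · rintro ⟨hh, hl, hc⟩
      have hm : l ∈ startPaths G1 v := hEq.symm ▸ (show l ∈ startPaths G2 v from ⟨hh, hc⟩)
      exact ⟨hh, hl, hm.2⟩
  unfold pathCount
  rw [hset]

end SDG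
end

section
/- Let N be a leaf-labeled network and uv an edge in a root component of N. Then there exists a rooted partner of N in which uv is directed as (u, v), and for any two rooted partners G1, G2 of N in which uv is directed as (u, v), the set of directed paths starting at v is the same; in particular μ(v, G1) = μ(v, G2). -/
open Relation

namespace SDG

variable {V : Type} [DecidableEq V]

set_option linter.unusedSectionVars false
set_option linter.unusedVariables false
section Aux

variable {N G G1 G2 : SDG V}

lemma directs_self (M : SDG V) : Directs M M :=
  ⟨subset_rfl, subset_rfl, fun e he hne => absurd he hne, fun p hp hnp => absurd hp hnp⟩

lemma rp_noCycle (hG : RootedPartner G N) : ¬ G.HasDirCycle :=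
  hG.1.2.1 G (directs_self G) hG.2

lemma rp_dirSubset (hG : RootedPartner G N) : N.dir ⊆ G.dir := hG.1.1.2.1

lemma rp_new_undir (hG : RootedPartner G N) {a b : V} (hab : (a, b) ∈ G.dir)
    (hnew : (a, b) ∉ N.dir) : s(a, b) ∈ N.undir :=
  (hG.1.1.2.2.1 (a, b) hab hnew).1

lemma proper_notdir (hP : N.Proper) {a b : V} (h : s(a, b) ∈ N.undir) : (a, b) ∉ N.dir :=
  fun hd => hP.2.2 (a, b) hd h

lemma newEdge_ideg (hG : RootedPartner G N) {a b : V} (hab : (a, b) ∈ G.dir)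
    (hnew : (a, b) ∉ N.dir) : G.ideg b = 1 := by
  have hmem : (a, b) ∈ G.dir.filter fun e => e.2 = b := Finset.mem_filter.2 ⟨hab, rfl⟩
  have h1 : 1 ≤ G.ideg b := Finset.card_pos.2 ⟨_, hmem⟩
  have h2 : ¬ 2 ≤ G.ideg b := by
    intro h2
    have : (a, b) ∈ G.hybridEdges := Finset.mem_filter.2 ⟨hab, h2⟩
    rw [hG.1.2.2] at this
    exact hnew (Finset.mem_filter.1 this).1
  omega

lemma backdet (hG : RootedPartner G N) {a b c : V} (hab : (a, b) ∈ G.dir)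
    (hnew : (a, b) ∉ N.dir) (hcb : (c, b) ∈ G.dir) : c = a := by
  have h1 := newEdge_ideg hG hab hnew
  have := Finset.card_le_one.1 (le_of_eq h1) (c, b)
    (Finset.mem_filter.2 ⟨hcb, rfl⟩) (a, b) (Finset.mem_filter.2 ⟨hab, rfl⟩)
  exact congrArg Prod.fst this

/-- in a rooted partner, each undirected edge of `N` receives exactly one direction -/
lemma orient_unique (hG : RootedPartner G N) {p : Sym2 V} (hp : p ∈ N.undir) :
    ∃! e : V × V, e ∈ G.dir ∧ e ∉ N.dir ∧ s(e.1, e.2) = p := by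
  have hnp : p ∉ G.undir := by rw [hG.2]; exact Finset.notMem_empty p
  exact hG.1.1.2.2.2 p hp hnp

lemma orient_or (hG : RootedPartner G N) {a b : V} (h : s(a, b) ∈ N.undir) :
    (a, b) ∈ G.dir ∨ (b, a) ∈ G.dir := by
  obtain ⟨e, ⟨he, _, hs⟩, _⟩ := orient_unique hG h
  rcases Sym2.eq_iff.1 hs with ⟨h1, h2⟩ | ⟨h1, h2⟩
  · left; rwa [show e = (a, b) by rw [← h1, ← h2]] at he
  · right; rwa [show e = (b, a) by rw [← h1, ← h2]] at he

lemma force_step (hP : N.Proper) (hG1 : RootedPartner G1 N) (hG2 : RootedPartner G2 N)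
    {p w z : V} (h1 : (p, w) ∈ G1.dir) (h2 : (p, w) ∈ G2.dir) (hwz : (w, z) ∈ G1.dir) :
    (w, z) ∈ G2.dir := by
  by_cases hn : (w, z) ∈ N.dir
  · exact rp_dirSubset hG2 hn
  · have hund : s(w, z) ∈ N.undir := rp_new_undir hG1 hwz hn
    rcases orient_or hG2 hund with h | h
    · exact h
    · exfalso
      have hzw_new : (z, w) ∉ N.dir := proper_notdir hP (Sym2.eq_swap ▸ hund)
      have hpz : p = z := backdet hG2 h hzw_new h2
      exact rp_noCycle hG1 ⟨(w, z), hwz, ReflTransGen.single (hpz ▸ h1)⟩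

lemma force_chain (hP : N.Proper) (hG1 : RootedPartner G1 N) (hG2 : RootedPartner G2 N) :
    ∀ (l : List V) (p w : V), (p, w) ∈ G1.dir → (p, w) ∈ G2.dir →
      List.Chain G1.dstep w l → List.Chain G2.dstep w l := by
  intro l
  induction l with
  | nil => intro _ _ _ _ _; exact List.Chain.nil
  | cons z t ih =>
    intro p w h1 h2 hc
    cases hc with
    | cons_cons hz hc' =>
      have hz2 : (w, z) ∈ G2.dir := force_step hP hG1 hG2 h1 h2 hz
      exact List.IsChain.cons_cons hz2 (ih w z hz hz2 hc')

lemma startPaths_eq_of (hP : N.Proper) (hG1 : RootedPartner G1 N) (hG2 : RootedPartner G2 N)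
    {u v : V} (h1 : (u, v) ∈ G1.dir) (h2 : (u, v) ∈ G2.dir) :
    startPaths G1 v = startPaths G2 v := by
  have key : ∀ (Ga Gb : SDG V), RootedPartner Ga N → RootedPartner Gb N →
      (u, v) ∈ Ga.dir → (u, v) ∈ Gb.dir → startPaths Ga v ⊆ startPaths Gb v := by
    intro Ga Gb hGa hGb ha hb l hl
    obtain ⟨hh, hc⟩ := hl
    match l, hh with
    | a :: t, hh =>
      have hav : a = v := by simpa using hh
      subst hav
      exact ⟨hh, force_chain hP hGa hGb t u a ha hb hc⟩
  exact Set.Subset.antisymm (key G1 G2 hG1 hG2 h1 h2) (key G2 G1 hG2 hG1 h2 h1)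

lemma pathCount_eq_of (hP : N.Proper) (hG1 : RootedPartner G1 N) (hG2 : RootedPartner G2 N)
    {u v : V} (h1 : (u, v) ∈ G1.dir) (h2 : (u, v) ∈ G2.dir) (x : V) :
    pathCount G1 v x = pathCount G2 v x := by
  have hsp := startPaths_eq_of hP hG1 hG2 h1 h2
  unfold pathCount
  congr 1
  ext l
  constructor
  · rintro ⟨hh, hl, hc⟩
    have : l ∈ startPaths G2 v := hsp ▸ (show l ∈ startPaths G1 v from ⟨hh, hc⟩)
    exact ⟨hh, hl, this.2⟩
  · rintro ⟨hh, hl, hc⟩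
    have : l ∈ startPaths G1 v := hsp ▸ (show l ∈ startPaths G2 v from ⟨hh, hc⟩)
    exact ⟨hh, hl, this.2⟩

end Aux
section Walks

variable {α : Type}

lemma zip_mem_getElem {l : List α} {e : α × α} (h : e ∈ l.zip l.tail) :
    ∃ i, ∃ _ : i + 1 < l.length, l[i] = e.1 ∧ l[i + 1] = e.2 := by
  obtain ⟨i, hi, hg⟩ := List.mem_iff_getElem.1 h
  rw [List.length_zip, List.length_tail] at hi
  have hi1 : i + 1 < l.length := by omega
  refine ⟨i, hi1, ?_, ?_⟩
  · rw [List.getElem_zip] at hg; exact congrArg Prod.fst hg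
  · rw [List.getElem_zip] at hg
    have := congrArg Prod.snd hg
    simpa [List.getElem_tail] using this

lemma chain'_zip {r : α → α → Prop} {l : List α} (h : l.Chain' r) {e : α × α}
    (he : e ∈ l.zip l.tail) : r e.1 e.2 := by
  obtain ⟨i, hi, h1, h2⟩ := zip_mem_getElem he
  have := List.isChain_iff_getElem.1 h i (by omega)
  rwa [h1, h2] at this

lemma zip_nodup_dir {l : List α} (hnd : l.Nodup) {a b : α}
    (hab : (a, b) ∈ l.zip l.tail) (hba : (b, a) ∈ l.zip l.tail) : False := by
  obtain ⟨i, hi, hi1, hi2⟩ := zip_mem_getElem hab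
  obtain ⟨j, hj, hj1, hj2⟩ := zip_mem_getElem hba
  have e1 : i = j + 1 := (hnd.getElem_inj_iff).1 (show l[i] = l[j+1] by rw [hi1, hj2])
  have e2 : i + 1 = j := (hnd.getElem_inj_iff).1 (show l[i+1] = l[j] by rw [hi2, hj1])
  omega

lemma reach_of_zip (r : α → α → Prop) :
    ∀ (m : List α) (a b : α), (∀ e ∈ m.zip m.tail, r e.1 e.2) →
      m.head? = some a → m.getLast? = some b → Relation.ReflTransGen r a b := by
  intro m
  induction m with
  | nil => intro a b _ hh _; simp at hh
  | cons x t ih =>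
    intro a b hS hh hl
    have hx : x = a := by simpa using hh
    subst hx
    match t with
    | [] =>
      have hb : x = b := by simpa using hl
      subst hb
      exact Relation.ReflTransGen.refl
    | y :: t' =>
      have hstep : r x y := hS (x, y) (by simp)
      have hrest : Relation.ReflTransGen r y b := by
        refine ih y b (fun e he => hS e ?_) rfl (by simpa using hl)
        simp only [List.tail_cons, List.zip_cons_cons, List.mem_cons]
        exact Or.inr he
      exact Relation.ReflTransGen.head hstep hrest

lemma dedup_chain (r : α → α → Prop) :
    ∀ (n : ℕ) (l : List α), l.length ≤ n → l.Chain' r → ∀ a b, l.head? = some a →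
      l.getLast? = some b →
      ∃ m : List α, m.Chain' r ∧ m.head? = some a ∧ m.getLast? = some b ∧ m.Nodup ∧ m ⊆ l := by
  intro n
  induction n with
  | zero =>
    intro l hlen _ a b hh _
    match l with
    | [] => simp at hh
    | x :: t => simp at hlen
  | succ n ih =>
    intro l hlen hc a b hh hlast
    match l with
    | x :: t =>
      have hxa : x = a := by simpa using hh
      subst hxa
      by_cases hmem : x ∈ t
      · obtain ⟨t1, t2, rfl⟩ := List.append_of_mem hmem
        have hsplit : x :: (t1 ++ x :: t2) = (x :: t1) ++ (x :: t2) := by simp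
        rw [hsplit] at hc hlast
        have hc2 : (x :: t2).Chain' r := (List.isChain_append.1 hc).2.1
        have hlast2 : (x :: t2).getLast? = some b := by
          rwa [List.getLast?_append_of_ne_nil _ (List.cons_ne_nil _ _)] at hlast
        have hlen2 : (x :: t2).length ≤ n := by
          simp only [List.length_append, List.length_cons] at hlen ⊢; omega
        obtain ⟨m, hm1, hm2, hm3, hm4, hm5⟩ := ih (x :: t2) hlen2 hc2 x b rfl hlast2
        exact ⟨m, hm1, hm2, hm3, hm4, fun z hz => by
          have := hm5 hz
          rw [hsplit]
          exact List.mem_append_right _ this⟩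
      · match t with
        | [] =>
          have hb : x = b := by simpa using hlast
          exact ⟨[x], by simp [List.Chain'], by simp, by simp [hb], by simp, by simp⟩
        | c :: t' =>
          have hrel : r x c := (List.isChain_cons_cons.1 hc).1
          have hc' : (c :: t').Chain' r := (List.isChain_cons_cons.1 hc).2
          have hlast' : (c :: t').getLast? = some b := by
            rwa [List.getLast?_cons_cons] at hlast
          have hlen' : (c :: t').length ≤ n := by
            simp only [List.length_cons] at hlen ⊢; omega
          obtain ⟨m, hm1, hm2, hm3, hm4, hm5⟩ := ih (c :: t') hlen' hc' c b rfl hlast'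
          match m, hm2 with
          | c' :: m', hm2 =>
            have hcc : c' = c := by simpa using hm2
            subst hcc
            refine ⟨x :: c' :: m', List.isChain_cons_cons.2 ⟨hrel, hm1⟩, rfl, ?_, ?_, ?_⟩
            · rwa [List.getLast?_cons_cons]
            · refine List.nodup_cons.2 ⟨fun hx => hmem ?_, hm4⟩
              exact hm5 hx
            · intro z hz
              rcases List.mem_cons.1 hz with rfl | hz
              · exact List.mem_cons_self
              · exact List.mem_cons_of_mem _ (hm5 hz)

lemma exists_nodup_chain (r : α → α → Prop) {a b : α} (h : Relation.ReflTransGen r a b) :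
    ∃ l : List α, l.Chain' r ∧ l.head? = some a ∧ l.getLast? = some b ∧ l.Nodup := by
  obtain ⟨l, hl1, hl2⟩ := List.exists_isChain_cons_of_relationReflTransGen h
  have hch : (a :: l).Chain' r := hl1
  have hlast : (a :: l).getLast? = some b := by
    rw [List.getLast?_eq_getLast (List.cons_ne_nil _ _), hl2]
  obtain ⟨m, h1, h2, h3, h4, _⟩ :=
    dedup_chain r (a :: l).length (a :: l) le_rfl hch a b rfl hlast
  exact ⟨m, h1, h2, h3, h4⟩

end Walks
section RootComp

variable {N : SDG V}

lemma rootcomp_no_indeg (hP : N.Proper) (hAcy : N.Acyclic) {w : V} (hw : InRootComp N w)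
    {c : V} (hc : (c, w) ∈ N.dir) : False := by
  classical
  have hsw : N.sreach w c := hw c (ReflTransGen.single (Or.inl hc))
  obtain ⟨l, hchain, hhead, hlast, hnd⟩ := exists_nodup_chain N.sstep hsw
  set S := l.zip l.tail with hSdef
  have hrep : ∀ p : Sym2 V, ∃ e : V × V, s(e.1, e.2) = p := fun p =>
    Sym2.ind (fun x y => ⟨(x, y), rfl⟩) p
  set o : Sym2 V → V × V := fun p =>
    if h : ∃ e, e ∈ S ∧ s(e.1, e.2) = p then h.choose else (hrep p).choose with hodef
  have ho : ∀ p, s((o p).1, (o p).2) = p := by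
    intro p
    by_cases h : ∃ e, e ∈ S ∧ s(e.1, e.2) = p
    · simp only [hodef, dif_pos h]; exact h.choose_spec.2
    · simp only [hodef, dif_neg h]; exact (hrep p).choose_spec
  set H : SDG V := ⟨∅, N.dir ∪ N.undir.image o⟩ with hHdef
  have hnew_im : ∀ e ∈ H.dir, e ∉ N.dir → ∃ q ∈ N.undir, o q = e := by
    intro e he hne
    rcases Finset.mem_union.1 he with h | h
    · exact absurd h hne
    · obtain ⟨q, hq, hqe⟩ := Finset.mem_image.1 h
      exact ⟨q, hq, hqe⟩
  have hDirects : Directs N H := by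
    refine ⟨by simp [hHdef], fun e he => Finset.mem_union_left _ he, ?_, ?_⟩
    · intro e he hne
      obtain ⟨q, hq, hqe⟩ := hnew_im e he hne
      have : s(e.1, e.2) = q := by rw [← hqe]; exact ho q
      exact ⟨this ▸ hq, by simp [hHdef]⟩
    · intro p hp _
      refine ⟨o p, ⟨Finset.mem_union_right _ (Finset.mem_image_of_mem o hp), ?_, ho p⟩, ?_⟩
      · intro hd
        have : ((o p).1, (o p).2) ∈ N.dir := hd
        exact hP.2.2 _ this (by rw [ho p]; exact hp)
      · rintro e ⟨he, hne, hse⟩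
        obtain ⟨q, hq, hqe⟩ := hnew_im e he hne
        have hqp : q = p := by rw [← hse, ← hqe]; exact (ho q).symm
        rw [← hqe, hqp]
  -- every step of the walk is a directed step of H
  have hstepH : ∀ e ∈ S, H.dstep e.1 e.2 := by
    rintro ⟨a, b⟩ he
    have hss : N.sstep a b := chain'_zip hchain he
    rcases hss with hd | hu
    · exact Finset.mem_union_left _ hd
    · have hspec : ∃ e, e ∈ S ∧ s(e.1, e.2) = s(a, b) := ⟨(a, b), he, rfl⟩
      have hmemS := hspec.choose_spec.1
      have hval := hspec.choose_spec.2
      have hoab : o s(a, b) = hspec.choose := by simp only [hodef, dif_pos hspec]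
      have hcases := Sym2.eq_iff.1 hval
      have hchoice : hspec.choose = (a, b) := by
        rcases hcases with ⟨h1, h2⟩ | ⟨h1, h2⟩
        · exact Prod.ext h1 h2
        · exfalso
          have : hspec.choose = (b, a) := Prod.ext h1 h2
          rw [this] at hmemS
          exact zip_nodup_dir hnd he hmemS
      have : o s(a, b) = (a, b) := hoab.trans hchoice
      exact Finset.mem_union_right _ (this ▸ Finset.mem_image_of_mem o hu)
  have hreach : H.dreach w c := by
    refine reach_of_zip H.dstep l w c (fun e he => hstepH e he) hhead hlast
  exact hAcy H hDirects rfl ⟨(c, w), Finset.mem_union_left _ hc, hreach⟩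

end RootComp
lemma reach_comparable {α : Type} {r : α → α → Prop}
    (hdet : ∀ x y z : α, r x z → r y z → x = y) :
    ∀ {a c : α}, ReflTransGen r a c → ∀ b, ReflTransGen r b c →
      ReflTransGen r a b ∨ ReflTransGen r b a := by
  intro a c h
  induction h with
  | refl => exact fun b hb => Or.inr hb
  | tail hay hyc ih =>
    intro b hbc
    rcases hbc.cases_tail with rfl | ⟨z, hbz, hzc⟩
    · exact Or.inl (ReflTransGen.tail (by assumption) hyc)
    · have hz : z = _ := hdet _ _ _ hzc hyc
      exact ih b (hz ▸ hbz)

section Flip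

variable (N G : SDG V) (u : V)

/-- a step along a newly directed edge of `G` -/
def nstep (a b : V) : Prop := (a, b) ∈ G.dir ∧ (a, b) ∉ N.dir

/-- `w` is a new-edge ancestor of `u` in `G` -/
def chainTo (w : V) : Prop := ReflTransGen (nstep N G) w u

open Classical in
/-- the set of new edges of `G` lying on the new-edge ancestor chain of `u` -/
noncomputable def flipF : Finset (V × V) :=
  G.dir.filter fun e => e ∉ N.dir ∧ chainTo N G u e.2

/-- `G` with the ancestor chain of `u` reversed -/
noncomputable def flipG : SDG V :=
  ⟨∅, (G.dir \ flipF N G u) ∪ (flipF N G u).image Prod.swap⟩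

variable {N G u}

lemma mem_flipF {e : V × V} :
    e ∈ flipF N G u ↔ e ∈ G.dir ∧ e ∉ N.dir ∧ chainTo N G u e.2 := by
  classical
  simp [flipF, Finset.mem_filter, and_assoc]

lemma mem_flipG {e : V × V} :
    e ∈ (flipG N G u).dir ↔ (e ∈ G.dir ∧ e ∉ flipF N G u) ∨ e.swap ∈ flipF N G u := by
  simp only [flipG, Finset.mem_union, Finset.mem_sdiff, Finset.mem_image]
  constructor
  · rintro (h | ⟨f, hf, rfl⟩)
    · exact Or.inl h
    · exact Or.inr (by simpa using hf)
  · rintro (h | h)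
    · exact Or.inl h
    · exact Or.inr ⟨e.swap, h, by simp⟩

variable (hP : N.Proper) (hAcyN : N.Acyclic) (hG : RootedPartner G N) (hu : InRootComp N u)
include hG

lemma chainTo_comp (hu : InRootComp N u) {w : V} (hw : chainTo N G u w) : InRootComp N w := by
  have key : N.sreach w u ∧ N.sreach u w := by
    induction hw using Relation.ReflTransGen.head_induction_on with
    | refl => exact ⟨ReflTransGen.refl, ReflTransGen.refl⟩
    | head hst _ ih =>
      rename_i a a' _
      have hund : s(a, a') ∈ N.undir := rp_new_undir hG hst.1 hst.2
      have h1 : N.sstep a a' := Or.inr hund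
      have h2 : N.sstep a' a := Or.inr (show s(a', a) ∈ N.undir by
        rw [Sym2.eq_swap]; exact hund)
      exact ⟨ReflTransGen.head h1 ih.1, ReflTransGen.tail ih.2 h2⟩
  intro z hz
  exact key.1.trans (hu z (hz.trans key.1))

lemma chainTo_no_indeg (hP : N.Proper) (hAcyN : N.Acyclic) (hu : InRootComp N u)
    {w c : V} (hw : chainTo N G u w) (hc : (c, w) ∈ N.dir) : False :=
  rootcomp_no_indeg hP hAcyN (chainTo_comp hG hu hw) hc

lemma child_unique {w y1 y2 : V} (h1 : nstep N G w y1) (hc1 : chainTo N G u y1)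
    (h2 : nstep N G w y2) (hc2 : chainTo N G u y2) : y1 = y2 := by
  have hdet : ∀ x y z : V, nstep N G x z → nstep N G y z → x = y := fun x y z ha hb =>
    backdet hG hb.1 hb.2 ha.1
  have helper : ∀ {a b : V}, ReflTransGen (nstep N G) a b → nstep N G w a → nstep N G w b →
      a = b := by
    intro a b hab ha hb
    rcases hab.cases_tail with rfl | ⟨t, hat, htb⟩
    · rfl
    · have htw : t = w := hdet _ _ _ htb hb
      subst htw
      exfalso
      refine rp_noCycle hG ⟨(t, a), ha.1, ?_⟩
      exact ReflTransGen.mono (show nstep N G ≤ G.dstep from fun x y h => h.1) _ _ hat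
  rcases reach_comparable hdet hc1 y2 hc2 with h | h
  · exact helper h h1 h2
  · exact (helper h h2 h1).symm

lemma claimIn (hP : N.Proper) (hAcyN : N.Acyclic) (hu : InRootComp N u) {w z : V}
    (hw : chainTo N G u w) (hz : (z, w) ∈ (flipG N G u).dir) :
    chainTo N G u z ∧ nstep N G w z := by
  rcases mem_flipG.1 hz with ⟨hzw, hnF⟩ | hsw
  · exfalso
    by_cases hn : (z, w) ∈ N.dir
    · exact chainTo_no_indeg hG hP hAcyN hu hw hn
    · exact hnF (mem_flipF.2 ⟨hzw, hn, hw⟩)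
  · obtain ⟨hwz, hnew, hcz⟩ := mem_flipF.1 hsw
    exact ⟨hcz, hwz, hnew⟩

lemma claimC (hP : N.Proper) (hAcyN : N.Acyclic) (hu : InRootComp N u) {w z : V}
    (hw : chainTo N G u w) (hz : (flipG N G u).dreach z w) :
    chainTo N G u z ∧ ReflTransGen (nstep N G) w z := by
  induction hz using Relation.ReflTransGen.head_induction_on with
  | refl => exact ⟨hw, ReflTransGen.refl⟩
  | head hst _ ih =>
    rename_i a a' _
    obtain ⟨hca', hreach⟩ := ih
    obtain ⟨hca, hns⟩ := claimIn hG hP hAcyN hu hca' hst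
    exact ⟨hca, ReflTransGen.tail hreach hns⟩

lemma lemG (hP : N.Proper) (hAcyN : N.Acyclic) (hu : InRootComp N u) {z w : V}
    (hz : ¬ chainTo N G u z) (h : (flipG N G u).dreach z w) : G.dreach z w := by
  induction h with
  | refl => exact ReflTransGen.refl
  | tail hzy hyw ih =>
    rename_i y w'
    have hcy : ¬ chainTo N G u y := fun hcy => hz (claimC hG hP hAcyN hu hcy hzy).1
    rcases mem_flipG.1 hyw with ⟨hG1, _⟩ | hsw
    · exact ReflTransGen.tail ih hG1
    · exact absurd (mem_flipF.1 hsw).2.2 hcy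

lemma flip_noCycle (hP : N.Proper) (hAcyN : N.Acyclic) (hu : InRootComp N u) :
    ¬ (flipG N G u).HasDirCycle := by
  rintro ⟨⟨a, b⟩, hab, hba⟩
  by_cases hca : chainTo N G u a
  · obtain ⟨hcb, hreach⟩ := claimC hG hP hAcyN hu hca hba
    rcases mem_flipG.1 hab with ⟨habG, hnF⟩ | hsw
    · by_cases hn : (a, b) ∈ N.dir
      · exact chainTo_no_indeg hG hP hAcyN hu hcb hn
      · exact hnF (mem_flipF.2 ⟨habG, hn, hcb⟩)
    · obtain ⟨hbaG, _, _⟩ := mem_flipF.1 hsw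
      exact rp_noCycle hG ⟨(b, a), hbaG, ReflTransGen.mono (show nstep N G ≤ G.dstep from fun x y h => h.1) _ _ hreach⟩
  · have hcb : ¬ chainTo N G u b := fun hcb => hca (claimIn hG hP hAcyN hu hcb hab).1
    have hGba : G.dreach b a := lemG hG hP hAcyN hu hcb hba
    rcases mem_flipG.1 hab with ⟨habG, _⟩ | hsw
    · exact rp_noCycle hG ⟨(a, b), habG, hGba⟩
    · exact hca (mem_flipF.1 hsw).2.2

lemma flip_filter_eq (hP : N.Proper) (hAcyN : N.Acyclic) (hu : InRootComp N u) {b : V}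
    (hb : ¬ chainTo N G u b) :
    ((flipG N G u).dir.filter fun e => e.2 = b) = G.dir.filter fun e => e.2 = b := by
  ext e
  simp only [Finset.mem_filter]
  constructor
  · rintro ⟨he, rfl⟩
    rcases mem_flipG.1 he with ⟨heG, _⟩ | hsw
    · exact ⟨heG, rfl⟩
    · exfalso
      obtain ⟨h1, h2, h3⟩ := mem_flipF.1 hsw
      exact hb (ReflTransGen.head ⟨h1, h2⟩ h3)
  · rintro ⟨he, rfl⟩
    have : e ∉ flipF N G u := fun hf => hb (mem_flipF.1 hf).2.2
    exact ⟨mem_flipG.2 (Or.inl ⟨he, this⟩), rfl⟩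

lemma flip_ideg_chain (hP : N.Proper) (hAcyN : N.Acyclic) (hu : InRootComp N u) {b : V}
    (hb : chainTo N G u b) : (flipG N G u).ideg b ≤ 1 := by
  apply Finset.card_le_one.2
  intro e1 he1 e2 he2
  obtain ⟨he1d, he1b⟩ := Finset.mem_filter.1 he1
  obtain ⟨he2d, he2b⟩ := Finset.mem_filter.1 he2
  have h1 : (e1.1, b) ∈ (flipG N G u).dir := by
    rw [← he1b, Prod.mk.eta]; exact he1d
  have h2 : (e2.1, b) ∈ (flipG N G u).dir := by
    rw [← he2b, Prod.mk.eta]; exact he2d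
  obtain ⟨hc1, hn1⟩ := claimIn hG hP hAcyN hu hb h1
  obtain ⟨hc2, hn2⟩ := claimIn hG hP hAcyN hu hb h2
  have := child_unique hG hn1 hc1 hn2 hc2
  exact Prod.ext this (he1b.trans he2b.symm)

lemma flip_dir_subset : N.dir ⊆ (flipG N G u).dir := by
  intro e he
  refine mem_flipG.2 (Or.inl ⟨rp_dirSubset hG he, fun hf => ?_⟩)
  exact (mem_flipF.1 hf).2.1 he

lemma flip_directs (hP : N.Proper) (hAcyN : N.Acyclic) (hu : InRootComp N u) :
    Directs N (flipG N G u) := by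
  refine ⟨by simp [flipG], flip_dir_subset hG, ?_, ?_⟩
  · intro e he hne
    refine ⟨?_, by simp [flipG]⟩
    rcases mem_flipG.1 he with ⟨heG, _⟩ | hsw
    · exact rp_new_undir hG heG hne
    · obtain ⟨h1, h2, _⟩ := mem_flipF.1 hsw
      have := rp_new_undir hG h1 h2
      rwa [Sym2.eq_swap] at this
  · intro p hp _
    obtain ⟨ep, ⟨hep_dir, hep_new, hep_s⟩, hep_uniq⟩ := orient_unique hG hp
    have hswap_s : s(ep.swap.1, ep.swap.2) = p := by
      rw [show s(ep.swap.1, ep.swap.2) = s(ep.2, ep.1) from rfl, Sym2.eq_swap]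
      exact hep_s
    by_cases hF : ep ∈ flipF N G u
    · refine ⟨ep.swap, ⟨mem_flipG.2 (Or.inr (by simpa using hF)), ?_, hswap_s⟩, ?_⟩
      · intro hd
        exact hP.2.2 _ hd (by rw [hswap_s]; exact hp)
      · rintro e ⟨he, hne, hse⟩
        rcases mem_flipG.1 he with ⟨heG, henF⟩ | hsw
        · exact absurd (hep_uniq e ⟨heG, hne, hse⟩ ▸ hF) henF
        · obtain ⟨h1, h2, _⟩ := mem_flipF.1 hsw
          have hse' : s(e.swap.1, e.swap.2) = p := by
            rw [show s(e.swap.1, e.swap.2) = s(e.2, e.1) from rfl, Sym2.eq_swap]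
            exact hse
          have : e.swap = ep := hep_uniq e.swap ⟨h1, h2, hse'⟩
          rw [← this]
          simp
    · refine ⟨ep, ⟨mem_flipG.2 (Or.inl ⟨hep_dir, hF⟩), hep_new, hep_s⟩, ?_⟩
      rintro e ⟨he, hne, hse⟩
      rcases mem_flipG.1 he with ⟨heG, _⟩ | hsw
      · exact hep_uniq e ⟨heG, hne, hse⟩
      · exfalso
        obtain ⟨h1, h2, _⟩ := mem_flipF.1 hsw
        have hse' : s(e.swap.1, e.swap.2) = p := by
          rw [show s(e.swap.1, e.swap.2) = s(e.2, e.1) from rfl, Sym2.eq_swap]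
          exact hse
        exact hF (hep_uniq e.swap ⟨h1, h2, hse'⟩ ▸ hsw)

lemma flip_hybrid (hP : N.Proper) (hAcyN : N.Acyclic) (hu : InRootComp N u) :
    (flipG N G u).hybridEdges = N.hybridEdges := by
  ext e
  simp only [hybridEdges, Finset.mem_filter]
  constructor
  · rintro ⟨he, hideg⟩
    by_cases hcb : chainTo N G u e.2
    · exact absurd hideg (by have := flip_ideg_chain hG hP hAcyN hu hcb; omega)
    · have hfe := flip_filter_eq hG hP hAcyN hu hcb
      have heG : e ∈ G.dir := by
        have : e ∈ G.dir.filter fun f => f.2 = e.2 := hfe ▸ Finset.mem_filter.2 ⟨he, rfl⟩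
        exact (Finset.mem_filter.1 this).1
      have hid : G.ideg e.2 = (flipG N G u).ideg e.2 := by
        unfold ideg; rw [hfe]
      have : e ∈ G.hybridEdges := Finset.mem_filter.2 ⟨heG, by rw [hid]; exact hideg⟩
      rw [hG.1.2.2] at this
      exact Finset.mem_filter.1 this
  · rintro ⟨he, hideg⟩
    by_cases hcb : chainTo N G u e.2
    · exact absurd (show (e.1, e.2) ∈ N.dir by rw [Prod.mk.eta]; exact he)
        (fun h => chainTo_no_indeg hG hP hAcyN hu hcb h)
    · have hfe := flip_filter_eq hG hP hAcyN hu hcb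
      have heGh : e ∈ G.hybridEdges := by
        rw [hG.1.2.2]; exact Finset.mem_filter.2 ⟨he, hideg⟩
      obtain ⟨heG, hidegG⟩ := Finset.mem_filter.1 heGh
      have he' : e ∈ (flipG N G u).dir := by
        have : e ∈ (flipG N G u).dir.filter fun f => f.2 = e.2 :=
          hfe ▸ Finset.mem_filter.2 ⟨heG, rfl⟩
        exact (Finset.mem_filter.1 this).1
      have hid : (flipG N G u).ideg e.2 = G.ideg e.2 := by
        unfold ideg; rw [hfe]
      exact ⟨he', by rw [hid]; exact hidegG⟩

lemma flip_acyclic (hP : N.Proper) (hAcyN : N.Acyclic) (hu : InRootComp N u) :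
    (flipG N G u).Acyclic := by
  intro H hH hHd
  have hdir : H.dir = (flipG N G u).dir := by
    apply Finset.Subset.antisymm
    · intro e he
      by_cases h : e ∈ (flipG N G u).dir
      · exact h
      · have := (hH.2.2.1 e he h).1
        simp [flipG] at this
    · exact hH.2.1
  rintro ⟨e, he, hr⟩
  refine flip_noCycle hG hP hAcyN hu ⟨e, hdir ▸ he, ?_⟩
  exact ReflTransGen.mono (show H.dstep ≤ (flipG N G u).dstep from fun a b h => show (a, b) ∈ (flipG N G u).dir from hdir ▸ h) _ _ hr

lemma flip_partner (hP : N.Proper) (hAcyN : N.Acyclic) (hu : InRootComp N u) :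
    RootedPartner (flipG N G u) N :=
  ⟨⟨flip_directs hG hP hAcyN hu, flip_acyclic hG hP hAcyN hu, flip_hybrid hG hP hAcyN hu⟩, rfl⟩

lemma flip_mem (hP : N.Proper) {v : V} (he : s(u, v) ∈ N.undir) (hvu : (v, u) ∈ G.dir) :
    (u, v) ∈ (flipG N G u).dir := by
  have hnew : (v, u) ∉ N.dir := proper_notdir hP (Sym2.eq_swap ▸ he)
  have : (v, u) ∈ flipF N G u := mem_flipF.2 ⟨hvu, hnew, ReflTransGen.refl⟩
  exact mem_flipG.2 (Or.inr (by simpa using this))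

end Flip
theorem statement_9 {V : Type} [DecidableEq V] (N : SDG V) (hP : N.Proper)
    (hL : LNetwork N) (u v : V) (he : s(u, v) ∈ N.undir) (hu : InRootComp N u) :
    (∃ G : SDG V, RootedPartner G N ∧ (u, v) ∈ G.dir) ∧
      ∀ G1 G2 : SDG V, RootedPartner G1 N → (u, v) ∈ G1.dir →
        RootedPartner G2 N → (u, v) ∈ G2.dir →
        startPaths G1 v = startPaths G2 v ∧
          ∀ x, IsUnrootedLeaf N x → pathCount G1 v x = pathCount G2 v x := by
  obtain ⟨⟨hAcyN, G, hGrp⟩, _⟩ := hL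
  constructor
  · rcases orient_or hGrp he with h | h
    · exact ⟨G, hGrp, h⟩
    · exact ⟨flipG N G u, flip_partner hGrp hP hAcyN hu, flip_mem hGrp hP he h⟩
  · intro G1 G2 hG1 h1 hG2 h2
    exact ⟨startPaths_eq_of hP hG1 hG2 h1 h2, fun x _ => pathCount_eq_of hP hG1 hG2 h1 h2 x⟩

end SDG
end
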